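/- Suppose the nonconstant meromorphic functions F and G share (1,0) and (∞,0), and H ≢ 0, where H = (F''/F' − 2F'/(F−1)) − (G''/G' − 2G'/(G−1)). Then N(r,∞;H) ≤ N(r,0;F | ≥ 2) + N(r,0;G | ≥ 2) + N̄_*(r,1;F,G) + N̄_*(r,∞;F,G) + N̄₀(r,0;F') + N̄₀(r,0;G') + S(r,F) + S(r,G). -/

import Mathlib

open Real MeasureTheory Metric Filter
open scoped Classical

noncomputable section

namespace Nev

/-- The positive part of the logarithm, `log⁺ x = max (log x) 0`. -/
def logPos (x : ℝ) : ℝ := max (Real.log x) 0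

/-- The order of a function at a point, as an integer (junk value `0` if `f` is not
meromorphic at `z` or the order is `⊤`). -/
def mOrder (f : ℂ → ℂ) (z : ℂ) : ℤ :=
  if h : MeromorphicAt f z then (meromorphicOrderAt f z).untopD 0 else 0

/-- Multiplicity of `z` as a zero of `f`. -/
def zmult (f : ℂ → ℂ) (z : ℂ) : ℕ := (mOrder f z).toNat

/-- Multiplicity of `z` as a pole of `f`. -/
def pmult (f : ℂ → ℂ) (z : ℂ) : ℕ := (-(mOrder f z)).toNat

/-- Multiplicity of `z` as an `a`-point of `f`. -/
def amult (f : ℂ → ℂ) (a z : ℂ) : ℕ := zmult (fun w => f w - a) z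

/-- The unintegrated counting function `n(t)` attached to a multiplicity weight `w`. -/
def cfun (w : ℂ → ℕ) (t : ℝ) : ℝ := ∑ᶠ z ∈ closedBall (0 : ℂ) t, (w z : ℝ)

/-- The integrated (Nevanlinna) counting function attached to a multiplicity weight `w`:
`N(r) = ∫₀^r (n(t) - n(0))/t dt + n(0) log r`. -/
def Nc (w : ℂ → ℕ) (r : ℝ) : ℝ :=
  (∫ t in (0:ℝ)..r, (cfun w t - cfun w 0) / t) + cfun w 0 * Real.log r

/-- The Nevanlinna proximity function `m(r,f)`. -/
def prox (f : ℂ → ℂ) (r : ℝ) : ℝ :=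
  (2 * π)⁻¹ * ∫ θ in (0:ℝ)..(2 * π), logPos ‖f ((r : ℂ) * Complex.exp (θ * Complex.I))‖

/-- The Nevanlinna characteristic function `T(r,f) = m(r,f) + N(r,∞;f)`. -/
def Tchar (f : ℂ → ℂ) (r : ℝ) : ℝ := prox f r + Nc (pmult f) r

/-- `f` has order zero: `limsup_{r→∞} log T(r,f) / log r = 0`. -/
def ZeroOrder (f : ℂ → ℂ) : Prop :=
  Filter.limsup (fun r => Real.log (Tchar f r) / Real.log r) Filter.atTop = 0

/-- `f` is transcendental: `T(r,f)/log r → ∞`. -/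
def TranscendentalFn (f : ℂ → ℂ) : Prop :=
  Filter.Tendsto (fun r => Tchar f r / Real.log r) Filter.atTop Filter.atTop

/-- A set `E ⊆ ℝ` has finite logarithmic measure. -/
def FinLogMeasure (E : Set ℝ) : Prop :=
  ∫⁻ t in E ∩ Set.Ioi 1, ENNReal.ofReal (1 / t) ≠ ⊤

/-- `s(r) = S(r,f)`: `s(r) = o(T(r,f))` as `r → ∞` outside a possible exceptional set of
finite logarithmic measure. -/
def SmallQty (s : ℝ → ℝ) (f : ℂ → ℂ) : Prop :=
  ∃ E : Set ℝ, FinLogMeasure E ∧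
    Filter.Tendsto (fun r => s r / Tchar f r)
      (Filter.atTop ⊓ Filter.principal Eᶜ) (nhds 0)

/-- A set `E ⊆ [1,∞)` has logarithmic density 1. -/
def LogDensityOne (E : Set ℝ) : Prop :=
  Filter.limsup
    (fun r => (∫ t in E ∩ Set.Icc 1 r, (1 : ℝ) / t) / Real.log r) Filter.atTop = 1

/-- `f` and `g` share the value `a` with weight `k`, i.e. `E_k(a,f) = E_k(a,g)`. -/
def ShareK (f g : ℂ → ℂ) (a : ℂ) (k : ℕ) : Prop :=
  ∀ z, min (amult f a z) (k + 1) = min (amult g a z) (k + 1)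

/-- `f` and `g` share the value `a` CM (counting multiplicities). -/
def ShareCM (f g : ℂ → ℂ) (a : ℂ) : Prop := ∀ z, amult f a z = amult g a z

/-- `f` and `g` share `∞` IM. -/
def SharePolesIM (f g : ℂ → ℂ) : Prop :=
  ∀ z, min (pmult f z) 1 = min (pmult g z) 1

/-- `f` is meromorphic in the whole plane. -/
def MeroOn (f : ℂ → ℂ) : Prop := ∀ z, MeromorphicAt f z

/-- `f` is entire. -/
def EntireFn (f : ℂ → ℂ) : Prop := ∀ z : ℂ, AnalyticAt ℂ f z

/-- `f` is not a constant function. -/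
def NonconstantFn (f : ℂ → ℂ) : Prop := ¬ ∃ c : ℂ, ∀ z, f z = c

/-- The `q`-shift difference operator `L(z,f) = b₁ f(qz+c) + b₀ f(z)`. -/
def Lop (q c b1 b0 : ℂ) (f : ℂ → ℂ) : ℂ → ℂ := fun z => b1 * f (q * z + c) + b0 * f z

/-- Number of distinct simple zeros of a polynomial. -/
def m1 (P : Polynomial ℂ) : ℕ :=
  (P.roots.toFinset.filter fun z => P.roots.count z = 1).card

/-- Number of distinct multiple zeros of a polynomial. -/
def m2 (P : Polynomial ℂ) : ℕ :=
  (P.roots.toFinset.filter fun z => 2 ≤ P.roots.count z).card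

/-- `Γ₀ = m₁ + 2 m₂`. -/
def Γ0 (P : Polynomial ℂ) : ℕ := m1 P + 2 * m2 P

/-- `Γ₁ = m₁ + m₂`. -/
def Γ1 (P : Polynomial ℂ) : ℕ := m1 P + m2 P

/-- The auxiliary function `H` built from `F` and `G`. -/
def Hfun (F G : ℂ → ℂ) : ℂ → ℂ := fun z =>
  (deriv (deriv F) z / deriv F z - 2 * deriv F z / (F z - 1)) -
    (deriv (deriv G) z / deriv G z - 2 * deriv G z / (G z - 1))

open Set Topology
variable {f g : ℂ → ℂ} {x : ℂ}

/-- compatibility: the order of a meromorphic function -/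
def _root_.MeromorphicAt.order (_hf : MeromorphicAt f x) : WithTop ℤ := meromorphicOrderAt f x

theorem _root_.MeromorphicAt.order_eq_top_iff (hf : MeromorphicAt f x) :
    hf.order = ⊤ ↔ ∀ᶠ z in 𝓝[≠] x, f z = 0 := meromorphicOrderAt_eq_top_iff

theorem _root_.MeromorphicAt.order_eq_int_iff (hf : MeromorphicAt f x) (n : ℤ) :
    hf.order = n ↔ ∃ g : ℂ → ℂ, AnalyticAt ℂ g x ∧ g x ≠ 0 ∧
      ∀ᶠ z in 𝓝[≠] x, f z = (z - x) ^ n • g z := meromorphicOrderAt_eq_int_iff hf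

theorem _root_.AnalyticAt.meromorphicAt_order (hf : AnalyticAt ℂ f x) :
    hf.meromorphicAt.order = (analyticOrderAt f x).map (fun n : ℕ => (n : ℤ)) :=
  hf.meromorphicOrderAt_eq

/-- eventual equality on punctured nbhd passes to derivatives -/
lemma ev_deriv (h : f =ᶠ[𝓝[≠] x] g) : deriv f =ᶠ[𝓝[≠] x] deriv g := by
  rcases mem_nhdsWithin.mp h with ⟨U, hUo, hxU, hsub⟩
  have hmem : U \ {x} ∈ 𝓝[≠] x := diff_mem_nhdsWithin_compl (hUo.mem_nhds hxU) _
  filter_upwards [hmem] with z hz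
  have hev : f =ᶠ[𝓝 z] g := by
    filter_upwards [(hUo.sdiff isClosed_singleton).mem_nhds hz] with w hw
    exact hsub ⟨hw.1, hw.2⟩
  exact hev.deriv_eq

lemma order_congr (hf : MeromorphicAt f x) (h : f =ᶠ[𝓝[≠] x] g) :
    (hf.congr h).order = hf.order := by
  rcases eq_or_ne hf.order ⊤ with ht | ht
  · rw [ht, MeromorphicAt.order_eq_top_iff]
    have := hf.order_eq_top_iff.mp ht
    filter_upwards [this, h] with z h1 h2
    rw [← h2]; exact h1
  · obtain ⟨n, hn⟩ := WithTop.ne_top_iff_exists.mp ht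
    obtain ⟨gg, hgg, hgg0, hev⟩ := (hf.order_eq_int_iff n).mp hn.symm
    rw [← hn, (hf.congr h).order_eq_int_iff]
    exact ⟨gg, hgg, hgg0, by filter_upwards [hev, h] with z h1 h2; rw [← h2]; exact h1⟩

lemma analyticAt_deriv (hg : AnalyticAt ℂ g x) : AnalyticAt ℂ (deriv g) x := by
  rcases _root_.mem_nhds_iff.mp (hg.eventually_analyticAt) with ⟨U, hsub, hUo, hxU⟩
  exact (AnalyticOnNhd.deriv (fun z hz => hsub hz) : AnalyticOnNhd ℂ (deriv g) U) x hxU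

lemma deriv_rep (hg : AnalyticAt ℂ g x) (n : ℤ) :
    ∀ᶠ z in 𝓝[≠] x, deriv (fun w => (w - x) ^ n * g w) z
      = (z - x) ^ (n - 1) * ((n : ℂ) * g z + (z - x) * deriv g z) := by
  have hga : ∀ᶠ z in 𝓝[≠] x, AnalyticAt ℂ g z :=
    nhdsWithin_le_nhds hg.eventually_analyticAt
  filter_upwards [hga, self_mem_nhdsWithin] with z hz hzx
  have hzx' : z - x ≠ 0 := sub_ne_zero.mpr (by simpa using hzx)
  have h1 : HasDerivAt (fun w : ℂ => (w - x) ^ n) ((n : ℂ) * (z - x) ^ (n - 1)) z := by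
    simpa [Function.comp_def] using ((hasDerivAt_zpow n (z - x) (Or.inl hzx')).comp z
      ((hasDerivAt_id z).sub_const x))
  have h2 : HasDerivAt g (deriv g z) z := hz.differentiableAt.hasDerivAt
  rw [(h1.fun_mul h2).deriv]
  have e1 : (z - x) ^ n = (z - x) ^ (n - 1) * (z - x) := by
    rw [← zpow_add_one₀ hzx', sub_add_cancel]
  rw [e1]; ring

lemma deriv_rep_of_order (hf : MeromorphicAt f x) {n : ℤ} (hn : hf.order = n) :
    ∃ g, AnalyticAt ℂ g x ∧ g x ≠ 0 ∧
      (∀ᶠ z in 𝓝[≠] x, f z = (z - x) ^ n * g z) ∧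
      (∀ᶠ z in 𝓝[≠] x, deriv f z
        = (z - x) ^ (n - 1) * ((n : ℂ) * g z + (z - x) * deriv g z)) := by
  obtain ⟨g, hg, hg0, hev⟩ := (hf.order_eq_int_iff n).mp hn
  simp only [smul_eq_mul] at hev
  refine ⟨g, hg, hg0, hev, ?_⟩
  filter_upwards [ev_deriv (f := f) (g := fun w => (w - x) ^ n * g w) hev,
    deriv_rep hg n] with z h1 h2
  rw [h1, h2]

lemma merom_deriv (hf : MeromorphicAt f x) : MeromorphicAt (deriv f) x := by
  rcases eq_or_ne hf.order ⊤ with ht | ht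
  · have h0 : f =ᶠ[𝓝[≠] x] (fun _ => (0:ℂ)) := hf.order_eq_top_iff.mp ht
    have : deriv f =ᶠ[𝓝[≠] x] (fun _ => (0:ℂ)) := by
      have := ev_deriv h0
      simpa [deriv_const] using this
    exact (MeromorphicAt.const 0 x).congr this.symm
  · obtain ⟨n, hn⟩ := WithTop.ne_top_iff_exists.mp ht
    obtain ⟨g, hg, hg0, _, hdev⟩ := deriv_rep_of_order hf hn.symm
    have hrhs : MeromorphicAt
        (fun z => (z - x) ^ (n - 1) * ((n : ℂ) * g z + (z - x) * deriv g z)) x := by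
      exact (((MeromorphicAt.id x).sub (.const x x)).zpow (n - 1)).mul
        (((MeromorphicAt.const _ x).mul hg.meromorphicAt).add
          (((MeromorphicAt.id x).sub (.const x x)).mul
            (analyticAt_deriv hg).meromorphicAt))
    exact hrhs.congr (EventuallyEq.symm hdev)

lemma order_map_nonneg {m : WithTop ℕ} : 0 ≤ m.map (fun n : ℕ => (n : ℤ)) := by
  cases m with
  | top => exact le_top
  | coe n =>
    rw [WithTop.map_coe]
    exact_mod_cast Int.ofNat_nonneg n

lemma order_nonneg_of_ev (hf : MeromorphicAt f x) {a : ℂ → ℂ} (ha : AnalyticAt ℂ a x)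
    (h : f =ᶠ[𝓝[≠] x] a) : 0 ≤ hf.order := by
  have h1 : (hf.congr h).order = hf.order := order_congr hf h
  have h2 : (hf.congr h).order = ha.meromorphicAt.order := rfl
  rw [← h1, h2, ha.meromorphicAt_order]
  exact order_map_nonneg

lemma order_deriv_eq (hf : MeromorphicAt f x) {n : ℤ} (hn : hf.order = n) (h0 : n ≠ 0) :
    (merom_deriv hf).order = ((n - 1 : ℤ) : WithTop ℤ) := by
  obtain ⟨g, hg, hg0, _, hdev⟩ := deriv_rep_of_order hf hn
  rw [(merom_deriv hf).order_eq_int_iff]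
  refine ⟨fun z => (n : ℂ) * g z + (z - x) * deriv g z, ?_, ?_, ?_⟩
  · exact ((analyticAt_const).mul hg).add
      ((analyticAt_id.sub analyticAt_const).mul (analyticAt_deriv hg))
  · simpa using mul_ne_zero (by exact_mod_cast h0 : (n:ℂ) ≠ 0) hg0
  · simpa [smul_eq_mul] using hdev

lemma order_deriv_nonneg (hf : MeromorphicAt f x) (hn : hf.order = (0 : ℤ)) :
    0 ≤ (merom_deriv hf).order := by
  obtain ⟨g, hg, hg0, hev, _⟩ := deriv_rep_of_order hf hn
  have hev' : f =ᶠ[𝓝[≠] x] g := by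
    filter_upwards [hev] with z h1; simpa using h1
  exact order_nonneg_of_ev (merom_deriv hf) (analyticAt_deriv hg) (ev_deriv hev')

lemma order_deriv_top (hf : MeromorphicAt f x) (hn : hf.order = ⊤) :
    (merom_deriv hf).order = ⊤ := by
  rw [(merom_deriv hf).order_eq_top_iff]
  have h0 : f =ᶠ[𝓝[≠] x] (fun _ => (0:ℂ)) := hf.order_eq_top_iff.mp hn
  have := ev_deriv h0
  exact (by simpa [deriv_const] using this : deriv f =ᶠ[𝓝[≠] x] (fun _ => (0:ℂ)))
lemma logderiv_rep (hf : MeromorphicAt f x) {n : ℤ} (hn : hf.order = n) :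
    ∃ a : ℂ → ℂ, AnalyticAt ℂ a x ∧
      (fun z => deriv f z / f z) =ᶠ[𝓝[≠] x] (fun z => (n : ℂ) / (z - x) + a z) := by
  obtain ⟨g, hg, hg0, hev, hdev⟩ := deriv_rep_of_order hf hn
  refine ⟨fun z => deriv g z / g z, (analyticAt_deriv hg).div hg hg0, ?_⟩
  have hgne : ∀ᶠ z in 𝓝[≠] x, g z ≠ 0 :=
    nhdsWithin_le_nhds (hg.continuousAt.eventually_ne hg0)
  filter_upwards [hev, hdev, hgne, self_mem_nhdsWithin] with z h1 h2 h3 hzx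
  have hzx' : (z : ℂ) - x ≠ 0 := sub_ne_zero.mpr (by simpa using hzx)
  have hzn : (z - x) ^ n ≠ 0 := zpow_ne_zero _ hzx'
  rw [h1, h2, zpow_sub_one₀ hzx']
  field_simp

lemma logderiv_top (hf : MeromorphicAt f x) (hn : hf.order = ⊤) :
    (fun z => deriv f z / f z) =ᶠ[𝓝[≠] x] (fun _ => (0:ℂ)) := by
  have h0 := hf.order_eq_top_iff.mp hn
  filter_upwards [h0, ev_deriv h0] with z h1 h2
  simp only [deriv_const'] at h2
  simp [h1, h2]

lemma merom_sub_const (hf : MeromorphicAt f x) (c : ℂ) :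
    MeromorphicAt (fun z => f z - c) x := hf.sub (.const c x)

lemma deriv_fun_sub_const (f : ℂ → ℂ) (c : ℂ) : deriv (fun z => f z - c) = deriv f := by
  funext z; exact deriv_sub_const c

lemma order_sub_const_of_neg (hf : MeromorphicAt f x) {n : ℤ} (hn : hf.order = n)
    (h0 : n < 0) (c : ℂ) : (merom_sub_const hf c).order = (n : WithTop ℤ) := by
  obtain ⟨g, hg, hg0, hev⟩ := (hf.order_eq_int_iff n).mp hn
  simp only [smul_eq_mul] at hev
  rw [(merom_sub_const hf c).order_eq_int_iff]
  set m : ℕ := (-n).toNat with hm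
  have hmn : (m : ℤ) = -n := Int.toNat_of_nonneg (by omega)
  have hm0 : m ≠ 0 := by omega
  refine ⟨fun z => g z - c * (z - x) ^ m, ?_, ?_, ?_⟩
  · exact hg.sub (analyticAt_const.mul (((analyticAt_id.sub analyticAt_const)).pow m))
  · simpa [sub_self, zero_pow hm0] using hg0
  · filter_upwards [hev, self_mem_nhdsWithin] with z h1 hzx
    have hzx' : (z : ℂ) - x ≠ 0 := sub_ne_zero.mpr (by simpa using hzx)
    have e1 : (z - x) ^ n * (z - x) ^ m = 1 := by
      rw [← zpow_natCast (z - x) m, ← zpow_add₀ hzx', hmn, add_neg_cancel, zpow_zero]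
    simp only [smul_eq_mul]
    rw [h1, mul_sub, show (z - x) ^ n * (c * (z - x) ^ m)
      = c * ((z - x) ^ n * (z - x) ^ m) by ring, e1, mul_one]

lemma order_sub_const_of_pos (hf : MeromorphicAt f x) {n : ℤ} (hn : hf.order = n)
    (h0 : 0 < n) {c : ℂ} (hc : c ≠ 0) :
    (merom_sub_const hf c).order = ((0 : ℤ) : WithTop ℤ) := by
  obtain ⟨g, hg, hg0, hev⟩ := (hf.order_eq_int_iff n).mp hn
  simp only [smul_eq_mul] at hev
  rw [(merom_sub_const hf c).order_eq_int_iff]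
  set m : ℕ := n.toNat with hm
  have hmn : (m : ℤ) = n := Int.toNat_of_nonneg (by omega)
  have hm0 : m ≠ 0 := by omega
  refine ⟨fun z => (z - x) ^ m * g z - c, ?_, ?_, ?_⟩
  · exact (((analyticAt_id.sub analyticAt_const).pow m).mul hg).sub analyticAt_const
  · show (x - x) ^ m * g x - c ≠ 0
    simpa [sub_self, zero_pow hm0] using hc
  · filter_upwards [hev, self_mem_nhdsWithin] with z h1 hzx
    simp only [smul_eq_mul, zpow_zero, one_mul]
    rw [h1, ← zpow_natCast (z - x) m, hmn]

lemma order_sub_const_top (hf : MeromorphicAt f x) (hn : hf.order = ⊤)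
    {c : ℂ} (hc : c ≠ 0) :
    (merom_sub_const hf c).order = ((0 : ℤ) : WithTop ℤ) := by
  have h0 := hf.order_eq_top_iff.mp hn
  rw [(merom_sub_const hf c).order_eq_int_iff]
  refine ⟨fun _ => -c, analyticAt_const, neg_ne_zero.mpr hc, ?_⟩
  filter_upwards [h0] with z h1
  simp [h1]

lemma order_sub_const_nonneg (hf : MeromorphicAt f x) (hn : 0 ≤ hf.order) (c : ℂ) :
    0 ≤ (merom_sub_const hf c).order := by
  rcases eq_or_ne hf.order ⊤ with ht | ht
  · have h0 := hf.order_eq_top_iff.mp ht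
    refine order_nonneg_of_ev _ (analyticAt_const (v := -c)) ?_
    filter_upwards [h0] with z h1
    simp [h1]
  · obtain ⟨n, hn'⟩ := WithTop.ne_top_iff_exists.mp ht
    have hn0 : 0 ≤ n := by
      have := hn; rw [← hn'] at this; exact_mod_cast this
    obtain ⟨g, hg, hg0, hev⟩ := (hf.order_eq_int_iff n).mp hn'.symm
    simp only [smul_eq_mul] at hev
    refine order_nonneg_of_ev (a := fun z => (z - x) ^ n.toNat * g z - c) _
      ((((analyticAt_id.sub analyticAt_const).pow n.toNat).mul hg).sub
        analyticAt_const) ?_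
    filter_upwards [hev] with z h1
    rw [h1, ← zpow_natCast (z - x) n.toNat, Int.toNat_of_nonneg hn0]
lemma order_eq_of_funeq {f g : ℂ → ℂ} (h : f = g) (hf : MeromorphicAt f x)
    (hg : MeromorphicAt g x) : hf.order = hg.order := by subst h; rfl

lemma part_rep (hfx : MeromorphicAt f x) :
    ∃ (c : ℤ) (a : ℂ → ℂ), AnalyticAt ℂ a x ∧
      (fun z => deriv (deriv f) z / deriv f z - 2 * deriv f z / (f z - 1))
        =ᶠ[𝓝[≠] x] (fun z => (c : ℂ) / (z - x) + a z) ∧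
      (((merom_deriv hfx).order = ⊤ ∧ c = 0) ∨
        (∃ d e : ℤ, (merom_deriv hfx).order = (d : WithTop ℤ) ∧
          (merom_sub_const hfx 1).order = (e : WithTop ℤ) ∧ c = d - 2 * e)) := by
  have hdeq : deriv (fun z => f z - (1:ℂ)) = deriv f := deriv_fun_sub_const f 1
  have hoD : (merom_deriv (merom_sub_const hfx 1)).order = (merom_deriv hfx).order :=
    order_eq_of_funeq hdeq _ _
  rcases eq_or_ne (merom_deriv hfx).order ⊤ with ht | ht
  · -- deriv f ≡ 0 near x
    have h0 : deriv f =ᶠ[𝓝[≠] x] (fun _ => (0:ℂ)) :=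
      (merom_deriv hfx).order_eq_top_iff.mp ht
    have h1 : (fun z => deriv (deriv f) z / deriv f z) =ᶠ[𝓝[≠] x] (fun _ => (0:ℂ)) :=
      logderiv_top (merom_deriv hfx) ht
    refine ⟨0, fun _ => 0, analyticAt_const, ?_, Or.inl ⟨ht, rfl⟩⟩
    filter_upwards [h0, h1] with z hz1 hz2
    have e1 : deriv f z = 0 := hz1
    have e2 : deriv (deriv f) z / deriv f z = 0 := hz2
    show deriv (deriv f) z / deriv f z - 2 * deriv f z / (f z - 1)
      = ((0:ℤ) : ℂ) / (z - x) + 0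
    rw [e2, e1]
    simp
  · obtain ⟨d, hd⟩ := WithTop.ne_top_iff_exists.mp ht
    have h1ne : (merom_sub_const hfx 1).order ≠ ⊤ := by
      intro hh
      exact ht (by rw [← hoD]; exact order_deriv_top _ hh)
    obtain ⟨e, he⟩ := WithTop.ne_top_iff_exists.mp h1ne
    obtain ⟨a1, ha1, hev1⟩ := logderiv_rep (merom_deriv hfx) hd.symm
    obtain ⟨a2, ha2, hev2⟩ := logderiv_rep (merom_sub_const hfx 1) he.symm
    rw [hdeq] at hev2
    refine ⟨d - 2 * e, fun z => a1 z - 2 * a2 z, ha1.sub (analyticAt_const.mul ha2),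
      ?_, Or.inr ⟨d, e, hd.symm, he.symm, rfl⟩⟩
    filter_upwards [hev1, hev2, self_mem_nhdsWithin] with z h1 h2 hzx
    have hzx' : (z : ℂ) - x ≠ 0 := sub_ne_zero.mpr (by simpa using hzx)
    have e1 : deriv (deriv f) z / deriv f z = (d : ℂ) / (z - x) + a1 z := h1
    have e2 : deriv f z / (f z - 1) = (e : ℂ) / (z - x) + a2 z := h2
    show deriv (deriv f) z / deriv f z - 2 * deriv f z / (f z - 1)
      = ((d - 2 * e : ℤ) : ℂ) / (z - x) + (a1 z - 2 * a2 z)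
    rw [show (2:ℂ) * deriv f z / (f z - 1) = 2 * (deriv f z / (f z - 1)) by ring, e1, e2]
    push_cast
    field_simp
    ring

lemma mOrder_eq (hf : MeromorphicAt f x) : mOrder f x = hf.order.untopD 0 := dif_pos hf

lemma zmult_eq (hf : MeromorphicAt f x) : zmult f x = (hf.order.untopD 0).toNat := by
  rw [zmult, mOrder_eq hf]

lemma pmult_eq (hf : MeromorphicAt f x) : pmult f x = (-(hf.order.untopD 0)).toNat := by
  rw [pmult, mOrder_eq hf]

lemma amult_eq (hf : MeromorphicAt f x) (a : ℂ) :
    amult f a x = ((merom_sub_const hf a).order.untopD 0).toNat := by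
  rw [amult, zmult_eq (merom_sub_const hf a)]

lemma pmult_of_rep {H : ℂ → ℂ} (c : ℤ) (a : ℂ → ℂ) (ha : AnalyticAt ℂ a x)
    (h : H =ᶠ[𝓝[≠] x] (fun z => (c : ℂ) / (z - x) + a z)) :
    MeromorphicAt H x ∧ pmult H x ≤ 1 ∧ (c = 0 → pmult H x = 0) := by
  have hrhs : MeromorphicAt (fun z => (c : ℂ) / (z - x) + a z) x :=
    ((MeromorphicAt.const _ x).div ((MeromorphicAt.id x).sub (.const x x))).add
      ha.meromorphicAt
  have hH : MeromorphicAt H x := hrhs.congr h.symm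
  refine ⟨hH, ?_, ?_⟩
  · rcases eq_or_ne c 0 with hc | hc
    · subst hc
      have : 0 ≤ hH.order := by
        refine order_nonneg_of_ev hH ha ?_
        filter_upwards [h] with z hz
        simpa using hz
      rw [pmult_eq hH]
      cases hor : hH.order with
      | top => simp
      | coe n =>
        rw [hor] at this
        have : (0:ℤ) ≤ n := by exact_mod_cast this
        simp [WithTop.untopD]
        omega
    · have hor : hH.order = ((-1 : ℤ) : WithTop ℤ) := by
        rw [hH.order_eq_int_iff]
        refine ⟨fun z => (c : ℂ) + (z - x) * a z, ?_, ?_, ?_⟩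
        · exact analyticAt_const.add ((analyticAt_id.sub analyticAt_const).mul ha)
        · simpa using (by exact_mod_cast hc : (c:ℂ) ≠ 0)
        · filter_upwards [h, self_mem_nhdsWithin] with z hz hzx
          have hzx' : (z : ℂ) - x ≠ 0 := sub_ne_zero.mpr (by simpa using hzx)
          rw [hz]
          simp only [smul_eq_mul]
          field_simp
      rw [pmult_eq hH, hor, WithTop.untopD_coe]
      decide
  · intro hc
    subst hc
    have : 0 ≤ hH.order := by
      refine order_nonneg_of_ev hH ha ?_
      filter_upwards [h] with z hz
      simpa using hz
    rw [pmult_eq hH]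
    cases hor : hH.order with
    | top => simp
    | coe n =>
      rw [hor] at this
      have : (0:ℤ) ≤ n := by exact_mod_cast this
      simp [WithTop.untopD]
      omega
lemma min_one_eq_zero {a b : ℕ} (h : min a 1 = min b 1) (ha : a = 0) : b = 0 := by
  subst ha
  rcases Nat.eq_zero_or_pos b with hb | hb
  · exact hb
  · exfalso
    rw [Nat.min_eq_left (by omega), Nat.min_eq_right hb] at h
    omega

lemma side_c {F : ℂ → ℂ} {x : ℂ} (hFx : MeromorphicAt F x) {c : ℤ}
    (hc : ((merom_deriv hFx).order = ⊤ ∧ c = 0) ∨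
      (∃ d e : ℤ, (merom_deriv hFx).order = (d : WithTop ℤ) ∧
        (merom_sub_const hFx 1).order = (e : WithTop ℤ) ∧ c = d - 2 * e))
    (hw1 : ¬ 2 ≤ zmult F x)
    (hw5 : ¬ (1 ≤ zmult (deriv F) x ∧ zmult F x = 0 ∧ amult F 1 x = 0)) :
    (amult F 1 x = 0 ∧ pmult F x = 0 ∧ c = 0) ∨
    (1 ≤ amult F 1 x ∧ pmult F x = 0 ∧ c = -(amult F 1 x : ℤ) - 1) ∨
    (1 ≤ pmult F x ∧ amult F 1 x = 0 ∧ c = (pmult F x : ℤ) - 1) := by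
  have hdeq : deriv (fun z => F z - (1:ℂ)) = deriv F := deriv_fun_sub_const F 1
  have hoDeq : (merom_deriv (merom_sub_const hFx 1)).order = (merom_deriv hFx).order :=
    order_eq_of_funeq hdeq _ _
  have hone : (1 : ℂ) ≠ 0 := one_ne_zero
  rcases hc with ⟨htop, hc0⟩ | ⟨d, e, hd, he, hcde⟩
  · left
    refine ⟨?_, ?_, hc0⟩
    · -- amult F 1 x = 0
      rw [amult_eq hFx 1]
      cases hoF : hFx.order with
      | top =>
        rw [order_sub_const_top hFx hoF hone]
        simp
      | coe n =>
        rcases lt_trichotomy n 0 with hn | hn | hn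
        · exact absurd (order_deriv_eq hFx hoF (by omega)) (by rw [htop]; exact WithTop.top_ne_coe)
        · subst hn
          cases ho1 : (merom_sub_const hFx 1).order with
          | top => simp
          | coe m =>
            have hm0 : 0 ≤ m := by
              have := order_sub_const_nonneg hFx (by rw [hoF]; exact_mod_cast le_refl (0:ℤ)) 1
              rw [ho1] at this
              exact_mod_cast this
            rcases eq_or_lt_of_le hm0 with hm | hm
            · rw [WithTop.untopD_coe, ← hm]
              simp
            · exfalso
              have := order_deriv_eq (merom_sub_const hFx 1) ho1 (by omega)
              rw [hoDeq, htop] at this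
              exact WithTop.top_ne_coe this
        · exact absurd (order_deriv_eq hFx hoF (by omega)) (by rw [htop]; exact WithTop.top_ne_coe)
    · -- pmult F x = 0
      rw [pmult_eq hFx]
      cases hoF : hFx.order with
      | top => simp
      | coe n =>
        rcases lt_trichotomy n 0 with hn | hn | hn
        · exact absurd (order_deriv_eq hFx hoF (by omega)) (by rw [htop]; exact WithTop.top_ne_coe)
        · subst hn; simp
        · exact absurd (order_deriv_eq hFx hoF (by omega)) (by rw [htop]; exact WithTop.top_ne_coe)
  · -- finite case
    cases hoF : hFx.order with
    | top =>
      exact absurd (order_deriv_top hFx hoF) (by rw [hd]; simp)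
    | coe n =>
      rcases lt_trichotomy n 0 with hn | hn | hn
      · -- pole of order p = -n
        right; right
        have he' : (merom_sub_const hFx 1).order = (n : WithTop ℤ) :=
          order_sub_const_of_neg hFx hoF hn 1
        have hen : e = n := by
          rw [he] at he'; exact_mod_cast he'
        have hd' : (merom_deriv hFx).order = ((n - 1 : ℤ) : WithTop ℤ) :=
          order_deriv_eq hFx hoF (by omega)
        have hdn : d = n - 1 := by
          rw [hd] at hd'; exact_mod_cast hd'
        have hp : pmult F x = (-n).toNat := by rw [pmult_eq hFx, hoF, WithTop.untopD_coe]
        have ha : amult F 1 x = 0 := by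
          rw [amult_eq hFx 1, he, WithTop.untopD_coe]
          omega
        refine ⟨by omega, ha, ?_⟩
        rw [hp, hcde, hdn, hen]
        omega
      · -- n = 0
        subst hn
        have hp : pmult F x = 0 := by rw [pmult_eq hFx, hoF]; simp
        have hz : zmult F x = 0 := by rw [zmult_eq hFx, hoF]; simp
        have he0 : 0 ≤ e := by
          have := order_sub_const_nonneg hFx (by rw [hoF]; exact_mod_cast le_refl (0:ℤ)) 1
          rw [he] at this; exact_mod_cast this
        have ha : amult F 1 x = e.toNat := by
          rw [amult_eq hFx 1, he, WithTop.untopD_coe]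
        rcases eq_or_lt_of_le he0 with he1 | he1
        · -- e = 0 : need d = 0
          left
          have hd0 : 0 ≤ d := by
            have := order_deriv_nonneg hFx hoF
            rw [hd] at this; exact_mod_cast this
          have hdz : zmult (deriv F) x = d.toNat := by
            rw [zmult_eq (merom_deriv hFx), hd, WithTop.untopD_coe]
          have hdle : d ≤ 0 := by
            by_contra hdpos
            exact hw5 ⟨by omega, hz, by omega⟩
          refine ⟨by omega, hp, by omega⟩
        · -- e ≥ 1 : 1-point
          right; left
          have hd' : (merom_deriv (merom_sub_const hFx 1)).order = ((e - 1 : ℤ) : WithTop ℤ) :=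
            order_deriv_eq (merom_sub_const hFx 1) he (by omega)
          rw [hoDeq, hd] at hd'
          have hde : d = e - 1 := by exact_mod_cast hd'
          refine ⟨by omega, hp, by omega⟩
      · -- n ≥ 1 : zero of F
        have hzn : zmult F x = n.toNat := by rw [zmult_eq hFx, hoF, WithTop.untopD_coe]
        have hn1 : n = 1 := by omega
        subst hn1
        left
        have hp : pmult F x = 0 := by rw [pmult_eq hFx, hoF, WithTop.untopD_coe]; simp
        have he' : (merom_sub_const hFx 1).order = ((0 : ℤ) : WithTop ℤ) :=
          order_sub_const_of_pos hFx hoF (by omega) hone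
        have he0 : e = 0 := by rw [he] at he'; exact_mod_cast he'
        have hd' : (merom_deriv hFx).order = ((0 : ℤ) : WithTop ℤ) := by
          simpa using order_deriv_eq hFx hoF (by omega)
        have hd0 : d = 0 := by rw [hd] at hd'; exact_mod_cast hd'
        exact ⟨by rw [amult_eq hFx 1, he', WithTop.untopD_coe]; simp, hp, by omega⟩

/-- combined weight -/
def Wt (F G : ℂ → ℂ) (z : ℂ) : ℕ :=
  (if 2 ≤ zmult F z then zmult F z else 0)
  + (if 2 ≤ zmult G z then zmult G z else 0)
  + (if 1 ≤ amult F 1 z ∧ 1 ≤ amult G 1 z ∧ amult F 1 z ≠ amult G 1 z then 1 else 0)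
  + (if 1 ≤ pmult F z ∧ 1 ≤ pmult G z ∧ pmult F z ≠ pmult G z then 1 else 0)
  + (if 1 ≤ zmult (deriv F) z ∧ zmult F z = 0 ∧ amult F 1 z = 0 then 1 else 0)
  + (if 1 ≤ zmult (deriv G) z ∧ zmult G z = 0 ∧ amult G 1 z = 0 then 1 else 0)

lemma key_pointwise (F G : ℂ → ℂ) (hF : MeroOn F) (hG : MeroOn G)
    (hshare1 : ShareK F G 1 0) (hshareInf : SharePolesIM F G) (x : ℂ) :
    MeromorphicAt (Hfun F G) x ∧ pmult (Hfun F G) x ≤ Wt F G x := by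
  obtain ⟨cF, aF, haF, hevF, hcF⟩ := part_rep (hF x)
  obtain ⟨cG, aG, haG, hevG, hcG⟩ := part_rep (hG x)
  have hevH : Hfun F G =ᶠ[𝓝[≠] x]
      (fun z => ((cF - cG : ℤ) : ℂ) / (z - x) + (aF z - aG z)) := by
    filter_upwards [hevF, hevG] with z h1 h2
    have e1 : deriv (deriv F) z / deriv F z - 2 * deriv F z / (F z - 1)
      = (cF : ℂ) / (z - x) + aF z := h1
    have e2 : deriv (deriv G) z / deriv G z - 2 * deriv G z / (G z - 1)
      = (cG : ℂ) / (z - x) + aG z := h2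
    show (deriv (deriv F) z / deriv F z - 2 * deriv F z / (F z - 1))
        - (deriv (deriv G) z / deriv G z - 2 * deriv G z / (G z - 1))
      = ((cF - cG : ℤ) : ℂ) / (z - x) + (aF z - aG z)
    rw [e1, e2]
    push_cast
    ring
  obtain ⟨hH, hle1, hzero⟩ := pmult_of_rep (cF - cG) _ (haF.sub haG) hevH
  refine ⟨hH, ?_⟩
  by_cases hW : Wt F G x = 0
  · rw [hW]
    -- extract the six conditions
    have h6 : (if 2 ≤ zmult F x then zmult F x else 0) = 0
        ∧ (if 2 ≤ zmult G x then zmult G x else 0) = 0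
        ∧ (if 1 ≤ amult F 1 x ∧ 1 ≤ amult G 1 x ∧ amult F 1 x ≠ amult G 1 x then 1 else 0) = 0
        ∧ (if 1 ≤ pmult F x ∧ 1 ≤ pmult G x ∧ pmult F x ≠ pmult G x then 1 else 0) = 0
        ∧ (if 1 ≤ zmult (deriv F) x ∧ zmult F x = 0 ∧ amult F 1 x = 0 then 1 else 0) = 0
        ∧ (if 1 ≤ zmult (deriv G) x ∧ zmult G x = 0 ∧ amult G 1 x = 0 then 1 else 0) = 0 := by
      unfold Wt at hW
      omega
    obtain ⟨h1, h2, h3, h4, h5, h6'⟩ := h6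
    have hw1F : ¬ 2 ≤ zmult F x := by
      intro hh; rw [if_pos hh] at h1; omega
    have hw1G : ¬ 2 ≤ zmult G x := by
      intro hh; rw [if_pos hh] at h2; omega
    have hw3 : ¬ (1 ≤ amult F 1 x ∧ 1 ≤ amult G 1 x ∧ amult F 1 x ≠ amult G 1 x) := by
      intro hh; rw [if_pos hh] at h3; omega
    have hw4 : ¬ (1 ≤ pmult F x ∧ 1 ≤ pmult G x ∧ pmult F x ≠ pmult G x) := by
      intro hh; rw [if_pos hh] at h4; omega
    have hw5F : ¬ (1 ≤ zmult (deriv F) x ∧ zmult F x = 0 ∧ amult F 1 x = 0) := by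
      intro hh; rw [if_pos hh] at h5; omega
    have hw5G : ¬ (1 ≤ zmult (deriv G) x ∧ zmult G x = 0 ∧ amult G 1 x = 0) := by
      intro hh; rw [if_pos hh] at h6'; omega
    have hsh1 : min (amult F 1 x) 1 = min (amult G 1 x) 1 := by
      have := hshare1 x; simpa using this
    have hshI : min (pmult F x) 1 = min (pmult G x) 1 := hshareInf x
    have hCF := side_c (hF x) hcF hw1F hw5F
    have hCG := side_c (hG x) hcG hw1G hw5G
    have hc0 : cF - cG = 0 := by
      rcases hCF with ⟨haf, hpf, hcf⟩ | ⟨haf, hpf, hcf⟩ | ⟨hpf, haf, hcf⟩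
      · rcases hCG with ⟨hag, hpg, hcg⟩ | ⟨hag, hpg, hcg⟩ | ⟨hpg, hag, hcg⟩
        · omega
        · have := min_one_eq_zero hsh1 haf; omega
        · have := min_one_eq_zero hshI hpf; omega
      · rcases hCG with ⟨hag, hpg, hcg⟩ | ⟨hag, hpg, hcg⟩ | ⟨hpg, hag, hcg⟩
        · have := min_one_eq_zero hsh1.symm hag; omega
        · have heq : amult F 1 x = amult G 1 x := by
            by_contra hne
            exact hw3 ⟨haf, hag, hne⟩
          omega
        · have := min_one_eq_zero hshI hpf; omega
      · rcases hCG with ⟨hag, hpg, hcg⟩ | ⟨hag, hpg, hcg⟩ | ⟨hpg, hag, hcg⟩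
        · have := min_one_eq_zero hshI.symm hpg; omega
        · have := min_one_eq_zero hshI.symm hpg; omega
        · have heq : pmult F x = pmult G x := by
            by_contra hne
            exact hw4 ⟨hpf, hpg, hne⟩
          omega
      
    rw [hzero hc0]
  · exact le_trans hle1 (Nat.one_le_iff_ne_zero.mpr hW)
lemma analyticAt_zpow_sub {x z : ℂ} (n : ℤ) (hz : z ≠ x) :
    AnalyticAt ℂ (fun w => (w - x) ^ n) z := by
  cases n with
  | ofNat m =>
    have h : AnalyticAt ℂ (fun w : ℂ => (w - x) ^ m) z := by fun_prop
    simpa using h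
  | negSucc m =>
    have h : AnalyticAt ℂ (fun w => ((w - x) ^ (m + 1))⁻¹) z :=
      ((analyticAt_id.sub analyticAt_const).pow (m + 1)).inv
        (pow_ne_zero _ (sub_ne_zero.mpr hz))
    simpa [zpow_negSucc] using h

lemma eventually_order_zero_or_top (hf : ∀ z : ℂ, MeromorphicAt f z) (x : ℂ) :
    ∀ᶠ z in 𝓝[≠] x, (hf z).order = (0 : ℤ) ∨ (hf z).order = ⊤ := by
  rcases eq_or_ne (hf x).order ⊤ with ht | ht
  · have h0 := (hf x).order_eq_top_iff.mp ht
    rcases mem_nhdsWithin.mp h0 with ⟨U, hUo, hxU, hsub⟩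
    have hmem : U \ {x} ∈ 𝓝[≠] x := diff_mem_nhdsWithin_compl (hUo.mem_nhds hxU) _
    filter_upwards [hmem] with z hz
    right
    rw [(hf z).order_eq_top_iff]
    have : U \ {x} ∈ 𝓝 z := (hUo.sdiff isClosed_singleton).mem_nhds hz
    filter_upwards [nhdsWithin_le_nhds this] with w hw
    exact hsub ⟨hw.1, hw.2⟩
  · obtain ⟨n, hn⟩ := WithTop.ne_top_iff_exists.mp ht
    obtain ⟨g, hg, hg0, hev⟩ := ((hf x).order_eq_int_iff n).mp hn.symm
    simp only [smul_eq_mul] at hev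
    rcases mem_nhdsWithin.mp hev with ⟨U, hUo, hxU, hsub⟩
    have hga : {w | AnalyticAt ℂ g w ∧ g w ≠ 0} ∈ 𝓝 x :=
      Filter.inter_mem hg.eventually_analyticAt
        (hg.continuousAt.eventually_ne hg0)
    rcases _root_.mem_nhds_iff.mp hga with ⟨U', hU'sub, hU'o, hxU'⟩
    have hmem : (U ∩ U') \ {x} ∈ 𝓝[≠] x :=
      diff_mem_nhdsWithin_compl ((hUo.inter hU'o).mem_nhds ⟨hxU, hxU'⟩) _
    filter_upwards [hmem] with z hz
    left
    have hzx : z ≠ x := hz.2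
    have hzU' := hU'sub hz.1.2
    rw [(hf z).order_eq_int_iff]
    refine ⟨fun w => (w - x) ^ n * g w, (analyticAt_zpow_sub n hzx).mul hzU'.1,
      mul_ne_zero (zpow_ne_zero _ (sub_ne_zero.mpr hzx)) hzU'.2, ?_⟩
    have hWmem : (U ∩ U') \ {x} ∈ 𝓝 z :=
      (((hUo.inter hU'o)).sdiff isClosed_singleton).mem_nhds hz
    filter_upwards [nhdsWithin_le_nhds hWmem] with w hw
    simpa using hsub ⟨hw.1.1, hw.2⟩

lemma finite_mOrder (hf : ∀ z : ℂ, MeromorphicAt f z) (r : ℝ) :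
    ({z : ℂ | mOrder f z ≠ 0} ∩ closedBall (0:ℂ) r).Finite := by
  by_contra hinf
  have hinf' : ({z : ℂ | mOrder f z ≠ 0} ∩ closedBall (0:ℂ) r).Infinite := hinf
  obtain ⟨x, _, hacc⟩ := hinf'.exists_accPt_of_subset_isCompact
    (isCompact_closedBall (0:ℂ) r) inter_subset_right
  have hfreq : ∃ᶠ z in 𝓝[≠] x, z ∈ {z : ℂ | mOrder f z ≠ 0} ∩ closedBall (0:ℂ) r := by
    have := hacc
    rw [accPt_iff_frequently] at this
    rw [frequently_nhdsWithin_iff]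
    exact this.mono fun y hy => ⟨hy.2, hy.1⟩
  have hev := eventually_order_zero_or_top hf x
  obtain ⟨z, hz1, hz2⟩ := (hfreq.and_eventually hev).exists
  apply hz1.1
  rw [mOrder_eq (hf z)]
  rcases hz2 with h | h
  · rw [h]; rfl
  · rw [h]; rfl
/-- local finiteness of a weight -/
def FinW (w : ℂ → ℕ) : Prop := ∀ r : ℝ, ({z : ℂ | w z ≠ 0} ∩ closedBall (0:ℂ) r).Finite

variable {w w' : ℂ → ℕ}

lemma finw_inter (hw : FinW w) (t : ℝ) :
    (closedBall (0:ℂ) t ∩ Function.support (fun z : ℂ => (w z : ℝ))).Finite := by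
  refine (hw t).subset ?_
  intro z hz
  refine ⟨?_, hz.1⟩
  have := hz.2
  simp only [Function.mem_support, ne_eq, Nat.cast_eq_zero] at this
  exact this

lemma cfun_eq_sum (hw : FinW w) (t : ℝ) :
    cfun w t = ∑ z ∈ (finw_inter hw t).toFinset, (w z : ℝ) :=
  finsum_mem_eq_sum _ (finw_inter hw t)

lemma cfun_nonneg (hw : FinW w) (t : ℝ) : 0 ≤ cfun w t := by
  rw [cfun_eq_sum hw t]
  exact Finset.sum_nonneg fun z _ => Nat.cast_nonneg _

lemma cfun_mono (hw : FinW w) {t₁ t₂ : ℝ} (h : t₁ ≤ t₂) : cfun w t₁ ≤ cfun w t₂ := by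
  rw [cfun_eq_sum hw t₁, cfun_eq_sum hw t₂]
  refine Finset.sum_le_sum_of_subset_of_nonneg ?_ (fun z _ _ => Nat.cast_nonneg _)
  intro z hz
  simp only [Set.Finite.mem_toFinset, Set.mem_inter_iff] at hz ⊢
  exact ⟨closedBall_subset_closedBall h hz.1, hz.2⟩

lemma cfun_monotone (hw : FinW w) : Monotone (cfun w) := fun _ _ h => cfun_mono hw h

/-- sum over any finite superset -/
lemma cfun_eq_sum_of_superset (hw : FinW w) {t : ℝ} {T : Finset ℂ}
    (hT : (finw_inter hw t).toFinset ⊆ T) (hTball : ∀ z ∈ T, z ∈ closedBall (0:ℂ) t) :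
    cfun w t = ∑ z ∈ T, (w z : ℝ) := by
  rw [cfun_eq_sum hw t]
  refine Finset.sum_subset hT fun z hz hnz => ?_
  by_contra hne
  apply hnz
  simp only [Set.Finite.mem_toFinset, Set.mem_inter_iff]
  refine ⟨hTball z hz, ?_⟩
  simp only [Function.mem_support, ne_eq, Nat.cast_eq_zero]
  intro h0
  exact hne (by rw [h0]; norm_num)

lemma cfun_le (hw : FinW w) (hw' : FinW w') (hle : ∀ z, w z ≤ w' z) (t : ℝ) :
    cfun w t ≤ cfun w' t := by
  classical
  set T := (finw_inter hw t).toFinset ∪ (finw_inter hw' t).toFinset with hT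
  have hball : ∀ z ∈ T, z ∈ closedBall (0:ℂ) t := by
    intro z hz
    rcases Finset.mem_union.mp hz with h | h
    · exact ((finw_inter hw t).mem_toFinset.mp h).1
    · exact ((finw_inter hw' t).mem_toFinset.mp h).1
  rw [cfun_eq_sum_of_superset hw Finset.subset_union_left hball,
    cfun_eq_sum_of_superset hw' Finset.subset_union_right hball]
  exact Finset.sum_le_sum fun z _ => Nat.cast_le.mpr (hle z)

lemma finw_add (hw : FinW w) (hw' : FinW w') : FinW (fun z => w z + w' z) := by
  intro r
  refine ((hw r).union (hw' r)).subset ?_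
  intro z hz
  rcases Nat.eq_zero_or_pos (w z) with h | h
  · right
    refine ⟨?_, hz.2⟩
    have h1 : w z + w' z ≠ 0 := hz.1
    show w' z ≠ 0
    omega
  · left
    refine ⟨?_, hz.2⟩
    show w z ≠ 0
    omega

lemma cfun_add (hw : FinW w) (hw' : FinW w') (t : ℝ) :
    cfun (fun z => w z + w' z) t = cfun w t + cfun w' t := by
  classical
  set T := ((finw_inter hw t).toFinset ∪ (finw_inter hw' t).toFinset)
    ∪ (finw_inter (finw_add hw hw') t).toFinset with hT
  have hball : ∀ z ∈ T, z ∈ closedBall (0:ℂ) t := by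
    intro z hz
    rcases Finset.mem_union.mp hz with h | h
    · rcases Finset.mem_union.mp h with h' | h'
      · exact ((finw_inter hw t).mem_toFinset.mp h').1
      · exact ((finw_inter hw' t).mem_toFinset.mp h').1
    · exact ((finw_inter (finw_add hw hw') t).mem_toFinset.mp h).1
  rw [cfun_eq_sum_of_superset hw (Finset.subset_union_left.trans Finset.subset_union_left) hball,
    cfun_eq_sum_of_superset hw' (Finset.subset_union_right.trans Finset.subset_union_left) hball,
    cfun_eq_sum_of_superset (finw_add hw hw') Finset.subset_union_right hball,
    ← Finset.sum_add_distrib]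
  congr 1
  funext z
  push_cast
  ring

lemma cfun_zero_eval : cfun w 0 = w 0 := by
  rw [cfun, closedBall_zero]
  exact finsum_mem_singleton

lemma cfun_vanish (hw : FinW w) {t : ℝ} (h : ∀ z, w z ≠ 0 → z ∉ closedBall (0:ℂ) t) :
    cfun w t = 0 := by
  rw [cfun_eq_sum hw t]
  refine Finset.sum_eq_zero fun z hz => ?_
  rw [(finw_inter hw t).mem_toFinset] at hz
  rcases Nat.eq_zero_or_pos (w z) with h0 | h0
  · simp [h0]
  · exact absurd hz.1 (h z (by omega))
def w0 (w : ℂ → ℕ) : ℂ → ℕ := fun z => if z = 0 then 0 else w z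

lemma w0_zero (w : ℂ → ℕ) : w0 w 0 = 0 := if_pos rfl

lemma finw_w0 (hw : FinW w) : FinW (w0 w) := by
  intro r
  refine (hw r).subset ?_
  intro z hz
  refine ⟨?_, hz.2⟩
  have h := hz.1
  show w z ≠ 0
  intro h0
  apply h
  show w0 w z = 0
  unfold w0
  split <;> simp [h0]

lemma cfun_split (hw : FinW w) {t : ℝ} (ht : 0 ≤ t) :
    cfun w t = (w 0 : ℝ) + cfun (w0 w) t := by
  classical
  have hδ : FinW (fun z : ℂ => if z = 0 then w 0 else 0) := by
    intro r
    refine (Set.finite_singleton (0:ℂ)).subset ?_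
    intro z hz
    have := hz.1
    by_contra hne
    simp only [Set.mem_singleton_iff] at hne
    exact this (if_neg hne)
  have hfun : w = fun z => (if z = 0 then w 0 else 0) + w0 w z := by
    funext z
    by_cases hz : z = 0 <;> simp [w0, hz]
  have hδval : cfun (fun z : ℂ => if z = 0 then w 0 else 0) t = (w 0 : ℝ) := by
    have hsub : (finw_inter hδ t).toFinset ⊆ {(0:ℂ)} := by
      intro z hz
      rw [(finw_inter hδ t).mem_toFinset] at hz
      have := hz.2
      simp only [Function.mem_support, ne_eq, Nat.cast_eq_zero] at this
      by_contra hne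
      simp only [Finset.mem_singleton] at hne
      exact this (if_neg hne)
    have hball : ∀ z ∈ ({(0:ℂ)} : Finset ℂ), z ∈ closedBall (0:ℂ) t := by
      intro z hz
      simp only [Finset.mem_singleton] at hz
      subst hz
      exact mem_closedBall_self ht
    rw [cfun_eq_sum_of_superset hδ hsub hball, Finset.sum_singleton, if_pos rfl]
  conv_lhs => rw [hfun]
  rw [cfun_add hδ (finw_w0 hw), hδval]

lemma integrable_cfun_div (hw : FinW w) (h0 : w 0 = 0) {r : ℝ} (hr : 0 ≤ r) :
    IntervalIntegrable (fun t => cfun w t / t) volume 0 r := by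
  have hmeas : Measurable fun t => cfun w t / t :=
    (cfun_monotone hw).measurable.div measurable_id
  obtain ⟨C, hC0, hC⟩ : ∃ C : ℝ, 0 ≤ C ∧ ∀ t ∈ Set.Icc (0:ℝ) r, cfun w t / t ≤ C := by
    classical
    by_cases hne : ((hw r).toFinset.image fun z => ‖z‖).Nonempty
    · set t₀ := ((hw r).toFinset.image fun z => ‖z‖).min' hne with ht₀
      have ht₀pos : 0 < t₀ := by
        have hmem := Finset.min'_mem _ hne
        rw [Finset.mem_image] at hmem
        obtain ⟨z, hz, hznorm⟩ := hmem
        rw [(hw r).mem_toFinset] at hz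
        have hz0 : z ≠ 0 := by
          intro hzz
          exact hz.1 (hzz ▸ h0)
        rw [ht₀, ← hznorm]
        exact norm_pos_iff.mpr hz0
      refine ⟨cfun w r / t₀, div_nonneg (cfun_nonneg hw r) ht₀pos.le, ?_⟩
      intro t ht
      by_cases htt : t < t₀
      · have : cfun w t = 0 := by
          apply cfun_vanish hw
          intro z hz hzball
          have hzr : z ∈ closedBall (0:ℂ) r :=
            closedBall_subset_closedBall ht.2 hzball
          have hzS : z ∈ (hw r).toFinset := by
            rw [(hw r).mem_toFinset]; exact ⟨hz, hzr⟩
          have : t₀ ≤ ‖z‖ := Finset.min'_le _ _ (Finset.mem_image_of_mem _ hzS)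
          have hznorm : ‖z‖ ≤ t := by
            simpa [Complex.dist_eq] using mem_closedBall.mp hzball
          linarith
        rw [this, zero_div]
        exact div_nonneg (cfun_nonneg hw r) ht₀pos.le
      · push_neg at htt
        exact div_le_div₀ (cfun_nonneg hw r) (cfun_mono hw ht.2) ht₀pos htt
    · refine ⟨0, le_refl _, ?_⟩
      intro t ht
      have : cfun w t = 0 := by
        apply cfun_vanish hw
        intro z hz hzball
        apply hne
        refine ⟨‖z‖, Finset.mem_image_of_mem _ ?_⟩
        rw [(hw r).mem_toFinset]
        exact ⟨hz, closedBall_subset_closedBall ht.2 hzball⟩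
      rw [this, zero_div]
  rw [intervalIntegrable_iff, Set.uIoc_of_le hr]
  refine MeasureTheory.Integrable.mono'
    (integrableOn_const (C := C) measure_Ioc_lt_top.ne) hmeas.aestronglyMeasurable ?_
  rw [MeasureTheory.ae_restrict_iff' measurableSet_Ioc]
  refine Filter.Eventually.of_forall fun t ht => ?_
  have ht' : t ∈ Set.Icc (0:ℝ) r := ⟨ht.1.le, ht.2⟩
  rw [Real.norm_eq_abs, abs_of_nonneg (div_nonneg (cfun_nonneg hw t) ht.1.le)]
  exact hC t ht'

lemma Nc_eq (hw : FinW w) {r : ℝ} (hr : 0 ≤ r) :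
    Nc w r = (∫ t in (0:ℝ)..r, cfun (w0 w) t / t) + (w 0 : ℝ) * Real.log r := by
  rw [Nc, cfun_zero_eval]
  congr 1
  apply intervalIntegral.integral_congr
  intro t ht
  rw [Set.uIcc_of_le hr] at ht
  show (cfun w t - (w 0 : ℝ)) / t = cfun (w0 w) t / t
  rw [cfun_split hw ht.1]
  ring_nf

lemma w0_le (hle : ∀ z, w z ≤ w' z) : ∀ z, w0 w z ≤ w0 w' z := by
  intro z
  unfold w0
  split
  · omega
  · exact hle z

lemma Nc_le (hle : ∀ z, w z ≤ w' z) (hw : FinW w) (hw' : FinW w') {r : ℝ} (hr : 1 ≤ r) :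
    Nc w r ≤ Nc w' r := by
  have hr0 : (0:ℝ) ≤ r := by linarith
  rw [Nc_eq hw hr0, Nc_eq hw' hr0]
  have h1 : (∫ t in (0:ℝ)..r, cfun (w0 w) t / t) ≤ ∫ t in (0:ℝ)..r, cfun (w0 w') t / t := by
    refine intervalIntegral.integral_mono_on hr0
      (integrable_cfun_div (finw_w0 hw) (w0_zero w) hr0)
      (integrable_cfun_div (finw_w0 hw') (w0_zero w') hr0) ?_
    intro t ht
    rcases eq_or_lt_of_le ht.1 with h0t | h0t
    · rw [← h0t]; simp
    · rw [div_le_div_iff_of_pos_right h0t]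
      exact cfun_le (finw_w0 hw) (finw_w0 hw') (w0_le hle) t
  have h2 : (w 0 : ℝ) * Real.log r ≤ (w' 0 : ℝ) * Real.log r :=
    mul_le_mul_of_nonneg_right (Nat.cast_le.mpr (hle 0)) (Real.log_nonneg hr)
  linarith

lemma Nc_add (hw : FinW w) (hw' : FinW w') {r : ℝ} (hr : 0 ≤ r) :
    Nc (fun z => w z + w' z) r = Nc w r + Nc w' r := by
  rw [Nc_eq (finw_add hw hw') hr, Nc_eq hw hr, Nc_eq hw' hr]
  have hi1 := integrable_cfun_div (finw_w0 hw) (w0_zero w) hr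
  have hi2 := integrable_cfun_div (finw_w0 hw') (w0_zero w') hr
  have heq : (∫ t in (0:ℝ)..r, cfun (w0 fun z => w z + w' z) t / t)
      = (∫ t in (0:ℝ)..r, cfun (w0 w) t / t) + ∫ t in (0:ℝ)..r, cfun (w0 w') t / t := by
    rw [← intervalIntegral.integral_add hi1 hi2]
    apply intervalIntegral.integral_congr
    intro t _
    show cfun (w0 fun z => w z + w' z) t / t = cfun (w0 w) t / t + cfun (w0 w') t / t
    have : (w0 fun z => w z + w' z) = fun z => w0 w z + w0 w' z := by
      funext z
      unfold w0
      split <;> simp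
    rw [this, cfun_add (finw_w0 hw) (finw_w0 hw'), add_div]
  rw [heq]
  push_cast
  ring
lemma finw_of_subset {w : ℂ → ℕ} {S : Set ℂ}
    (hS : ∀ r : ℝ, (S ∩ closedBall (0:ℂ) r).Finite)
    (h : ∀ z, w z ≠ 0 → z ∈ S) : FinW w := fun r =>
  (hS r).subset fun z hz => ⟨h z hz.1, hz.2⟩

lemma finw_of_le {w w' : ℂ → ℕ} (hle : ∀ z, w z ≤ w' z) (hw' : FinW w') : FinW w :=
  fun r => (hw' r).subset fun z hz => by
    refine ⟨?_, hz.2⟩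
    have h1 : w z ≠ 0 := hz.1
    have h2 := hle z
    show w' z ≠ 0
    omega

lemma zmult_ne_zero_mOrder {f : ℂ → ℂ} {z : ℂ} (h : zmult f z ≠ 0) : mOrder f z ≠ 0 := by
  unfold zmult at h
  omega

lemma pmult_ne_zero_mOrder {f : ℂ → ℂ} {z : ℂ} (h : pmult f z ≠ 0) : mOrder f z ≠ 0 := by
  unfold pmult at h
  omega

lemma main_ineq (F G : ℂ → ℂ) (hF : MeroOn F) (hG : MeroOn G)
    (hshare1 : ShareK F G 1 0) (hshareInf : SharePolesIM F G) {r : ℝ} (hr : 1 ≤ r) :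
    Nc (pmult (Hfun F G)) r ≤
      Nc (fun z => if 2 ≤ zmult F z then zmult F z else 0) r
      + Nc (fun z => if 2 ≤ zmult G z then zmult G z else 0) r
      + Nc (fun z => if 1 ≤ amult F 1 z ∧ 1 ≤ amult G 1 z ∧
          amult F 1 z ≠ amult G 1 z then 1 else 0) r
      + Nc (fun z => if 1 ≤ pmult F z ∧ 1 ≤ pmult G z ∧
          pmult F z ≠ pmult G z then 1 else 0) r
      + Nc (fun z => if 1 ≤ zmult (deriv F) z ∧ zmult F z = 0 ∧
          amult F 1 z = 0 then 1 else 0) r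
      + Nc (fun z => if 1 ≤ zmult (deriv G) z ∧ zmult G z = 0 ∧
          amult G 1 z = 0 then 1 else 0) r := by
  classical
  have hr0 : (0:ℝ) ≤ r := by linarith
  set v1 : ℂ → ℕ := fun z => if 2 ≤ zmult F z then zmult F z else 0 with hv1
  set v2 : ℂ → ℕ := fun z => if 2 ≤ zmult G z then zmult G z else 0 with hv2
  set v3 : ℂ → ℕ := fun z => if 1 ≤ amult F 1 z ∧ 1 ≤ amult G 1 z ∧
      amult F 1 z ≠ amult G 1 z then 1 else 0 with hv3
  set v4 : ℂ → ℕ := fun z => if 1 ≤ pmult F z ∧ 1 ≤ pmult G z ∧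
      pmult F z ≠ pmult G z then 1 else 0 with hv4
  set v5 : ℂ → ℕ := fun z => if 1 ≤ zmult (deriv F) z ∧ zmult F z = 0 ∧
      amult F 1 z = 0 then 1 else 0 with hv5
  set v6 : ℂ → ℕ := fun z => if 1 ≤ zmult (deriv G) z ∧ zmult G z = 0 ∧
      amult G 1 z = 0 then 1 else 0 with hv6
  have hf1 : FinW v1 := by
    refine finw_of_subset (finite_mOrder hF) fun z hz => ?_
    have hz' : (if 2 ≤ zmult F z then zmult F z else 0) ≠ 0 := hz
    have : 2 ≤ zmult F z := by by_contra hc; rw [if_neg hc] at hz'; exact hz' rfl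
    exact zmult_ne_zero_mOrder (by omega)
  have hf2 : FinW v2 := by
    refine finw_of_subset (finite_mOrder hG) fun z hz => ?_
    have hz' : (if 2 ≤ zmult G z then zmult G z else 0) ≠ 0 := hz
    have : 2 ≤ zmult G z := by by_contra hc; rw [if_neg hc] at hz'; exact hz' rfl
    exact zmult_ne_zero_mOrder (by omega)
  have hf3 : FinW v3 := by
    refine finw_of_subset (finite_mOrder (f := fun w => F w - 1)
      (fun z => merom_sub_const (hF z) 1)) fun z hz => ?_
    have hz' : (if 1 ≤ amult F 1 z ∧ 1 ≤ amult G 1 z ∧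
        amult F 1 z ≠ amult G 1 z then 1 else 0 : ℕ) ≠ 0 := hz
    have h3 : 1 ≤ amult F 1 z := by
      by_contra hc
      apply hz'
      rw [if_neg]
      intro ⟨ha, _, _⟩
      exact hc ha
    unfold amult at h3
    exact zmult_ne_zero_mOrder (by omega)
  have hf4 : FinW v4 := by
    refine finw_of_subset (finite_mOrder hF) fun z hz => ?_
    have hz' : (if 1 ≤ pmult F z ∧ 1 ≤ pmult G z ∧
        pmult F z ≠ pmult G z then 1 else 0 : ℕ) ≠ 0 := hz
    have h4 : 1 ≤ pmult F z := by
      by_contra hc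
      apply hz'
      rw [if_neg]
      intro ⟨ha, _, _⟩
      exact hc ha
    exact pmult_ne_zero_mOrder (by omega)
  have hf5 : FinW v5 := by
    refine finw_of_subset (finite_mOrder (f := deriv F)
      (fun z => merom_deriv (hF z))) fun z hz => ?_
    have hz' : (if 1 ≤ zmult (deriv F) z ∧ zmult F z = 0 ∧
        amult F 1 z = 0 then 1 else 0 : ℕ) ≠ 0 := hz
    have h5 : 1 ≤ zmult (deriv F) z := by
      by_contra hc
      apply hz'
      rw [if_neg]
      intro ⟨ha, _, _⟩
      exact hc ha
    exact zmult_ne_zero_mOrder (by omega)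
  have hf6 : FinW v6 := by
    refine finw_of_subset (finite_mOrder (f := deriv G)
      (fun z => merom_deriv (hG z))) fun z hz => ?_
    have hz' : (if 1 ≤ zmult (deriv G) z ∧ zmult G z = 0 ∧
        amult G 1 z = 0 then 1 else 0 : ℕ) ≠ 0 := hz
    have h6 : 1 ≤ zmult (deriv G) z := by
      by_contra hc
      apply hz'
      rw [if_neg]
      intro ⟨ha, _, _⟩
      exact hc ha
    exact zmult_ne_zero_mOrder (by omega)
  have hWt : Wt F G = fun z => ((((v1 z + v2 z) + v3 z) + v4 z) + v5 z) + v6 z := rfl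
  have hp12 : FinW (fun z => v1 z + v2 z) := finw_add hf1 hf2
  have hp3 : FinW (fun z => (v1 z + v2 z) + v3 z) := finw_add hp12 hf3
  have hp4 : FinW (fun z => ((v1 z + v2 z) + v3 z) + v4 z) := finw_add hp3 hf4
  have hp5 : FinW (fun z => (((v1 z + v2 z) + v3 z) + v4 z) + v5 z) := finw_add hp4 hf5
  have hWfin : FinW (Wt F G) := by rw [hWt]; exact finw_add hp5 hf6
  have hkey := fun x => (key_pointwise F G hF hG hshare1 hshareInf x).2
  have hHfin : FinW (pmult (Hfun F G)) := finw_of_le hkey hWfin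
  have step1 : Nc (pmult (Hfun F G)) r ≤ Nc (Wt F G) r := Nc_le hkey hHfin hWfin hr
  have step2 : Nc (Wt F G) r = Nc v1 r + Nc v2 r + Nc v3 r + Nc v4 r + Nc v5 r + Nc v6 r := by
    rw [hWt]
    rw [Nc_add hp5 hf6 hr0, Nc_add hp4 hf5 hr0, Nc_add hp3 hf4 hr0,
      Nc_add hp12 hf3 hr0, Nc_add hf1 hf2 hr0]
  linarith

lemma smallqty_of_eventually_zero {s : ℝ → ℝ} (f : ℂ → ℂ)
    (h : ∀ r : ℝ, 1 ≤ r → s r = 0) : SmallQty s f := by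
  refine ⟨∅, ?_, ?_⟩
  · unfold FinLogMeasure
    simp
  · have he : atTop ⊓ 𝓟 ((∅ : Set ℝ)ᶜ) = atTop := by simp
    rw [he]
    have hev : (fun r => s r / Tchar f r) =ᶠ[atTop] fun _ => (0:ℝ) := by
      filter_upwards [eventually_ge_atTop (1:ℝ)] with r hr
      rw [h r hr, zero_div]
    exact Tendsto.congr' hev.symm tendsto_const_nhds
/-- bound on the pole counting function of `H`. -/
theorem stmt14_poles_of_H
    (F G : ℂ → ℂ) (hF : MeroOn F) (hG : MeroOn G)
    (hFc : NonconstantFn F) (hGc : NonconstantFn G)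
    (hshare1 : ShareK F G 1 0)
    (hshareInf : SharePolesIM F G)
    (hH : ∃ z, Hfun F G z ≠ 0) :
    ∃ SF SG : ℝ → ℝ, SmallQty SF F ∧ SmallQty SG G ∧ ∀ r : ℝ,
      Nc (pmult (Hfun F G)) r ≤
        Nc (fun z => if 2 ≤ zmult F z then zmult F z else 0) r
        + Nc (fun z => if 2 ≤ zmult G z then zmult G z else 0) r
        + Nc (fun z => if 1 ≤ amult F 1 z ∧ 1 ≤ amult G 1 z ∧
            amult F 1 z ≠ amult G 1 z then 1 else 0) r
        + Nc (fun z => if 1 ≤ pmult F z ∧ 1 ≤ pmult G z ∧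
            pmult F z ≠ pmult G z then 1 else 0) r
        + Nc (fun z => if 1 ≤ zmult (deriv F) z ∧ zmult F z = 0 ∧
            amult F 1 z = 0 then 1 else 0) r
        + Nc (fun z => if 1 ≤ zmult (deriv G) z ∧ zmult G z = 0 ∧
            amult G 1 z = 0 then 1 else 0) r
        + SF r + SG r := by
  classical
  refine ⟨fun r => max 0 (Nc (pmult (Hfun F G)) r -
      (Nc (fun z => if 2 ≤ zmult F z then zmult F z else 0) r
        + Nc (fun z => if 2 ≤ zmult G z then zmult G z else 0) r
        + Nc (fun z => if 1 ≤ amult F 1 z ∧ 1 ≤ amult G 1 z ∧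
            amult F 1 z ≠ amult G 1 z then 1 else 0) r
        + Nc (fun z => if 1 ≤ pmult F z ∧ 1 ≤ pmult G z ∧
            pmult F z ≠ pmult G z then 1 else 0) r
        + Nc (fun z => if 1 ≤ zmult (deriv F) z ∧ zmult F z = 0 ∧
            amult F 1 z = 0 then 1 else 0) r
        + Nc (fun z => if 1 ≤ zmult (deriv G) z ∧ zmult G z = 0 ∧
            amult G 1 z = 0 then 1 else 0) r)),
    fun _ => 0, ?_, ?_, ?_⟩
  · refine smallqty_of_eventually_zero F fun r hr => ?_
    have h := main_ineq F G hF hG hshare1 hshareInf hr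
    exact max_eq_left (by linarith)
  · exact smallqty_of_eventually_zero G fun _ _ => rfl
  · intro r
    have h := le_max_right (0:ℝ) (Nc (pmult (Hfun F G)) r -
      (Nc (fun z => if 2 ≤ zmult F z then zmult F z else 0) r
        + Nc (fun z => if 2 ≤ zmult G z then zmult G z else 0) r
        + Nc (fun z => if 1 ≤ amult F 1 z ∧ 1 ≤ amult G 1 z ∧
            amult F 1 z ≠ amult G 1 z then 1 else 0) r
        + Nc (fun z => if 1 ≤ pmult F z ∧ 1 ≤ pmult G z ∧
            pmult F z ≠ pmult G z then 1 else 0) r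
        + Nc (fun z => if 1 ≤ zmult (deriv F) z ∧ zmult F z = 0 ∧
            amult F 1 z = 0 then 1 else 0) r
        + Nc (fun z => if 1 ≤ zmult (deriv G) z ∧ zmult G z = 0 ∧
            amult G 1 z = 0 then 1 else 0) r))
    simp only [show (fun _ : ℝ => (0:ℝ)) r = 0 from rfl]
    linarith
end Nev
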